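/- The foliation L₁ of the 3-torus T³ obtained by gluing the two torus boundary leaves of L (the slicewise Reeb-annulus foliation of T² × I) is not transversely orientable: any continuous nowhere-zero vector field transverse to the leaves of L would point outward along both boundary tori of T² × I, and the orientation-reversing identification of the two boundary tori makes a continuous extension across the resulting non-separating torus leaf impossible. -/
import Mathlib


/-- The (slabwise) normal field of the foliation `L₁` of `T³`, obtained from the
slicewise Reeb-annulus foliation of `T² × I` by gluing the two boundary tori: on the
slab `x ∈ [n, n+1]` it is the gradient of `((2{x}−1)² − 1)·exp θ`, where `{x}` is the
fractional part. -/
noncomputable def G17 : ℝ × ℝ × ℝ → ℝ × ℝ × ℝ :=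
  fun p =>
    (4 * (2 * Int.fract p.1 - 1) * Real.exp p.2.1,
      ((2 * Int.fract p.1 - 1) ^ 2 - 1) * Real.exp p.2.1, 0)

/-- The euclidean pairing on `ℝ³`. -/
def dot3 (u v : ℝ × ℝ × ℝ) : ℝ :=
  u.1 * v.1 + u.2.1 * v.2.1 + u.2.2 * v.2.2

/-- The foliation `L₁` of `T³` obtained by gluing the two torus boundary leaves of the
slicewise Reeb-annulus foliation `L` of `T² × I` is not transversely orientable: there
is no continuous nowhere-zero vector field on `T³` (i.e. a `ℤ³`-periodic field on `ℝ³`)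
that is everywhere transverse to the leaves (nonzero pairing with the normal field
`G17`), because the transverse directions induced from the two sides of the glued
non-separating torus leaf disagree. -/
theorem stmt17 :
    ¬ ∃ V : ℝ × ℝ × ℝ → ℝ × ℝ × ℝ,
      Continuous V ∧ (∀ p, V p ≠ 0) ∧
      (∀ p : ℝ × ℝ × ℝ,
        V (p.1 + 1, p.2.1, p.2.2) = V p ∧
        V (p.1, p.2.1 + 1, p.2.2) = V p ∧
        V (p.1, p.2.1, p.2.2 + 1) = V p) ∧
      (∀ p, dot3 (V p) (G17 p) ≠ 0) := by
  rintro ⟨V, hVc, hVnz, hVper, hVt⟩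
  -- continuous interpolating pairing along x ∈ [0,1] at θ = z = 0
  set φ : ℝ → ℝ := fun x =>
    dot3 (V (x, 0, 0)) (4 * (2 * x - 1) * Real.exp 0, ((2 * x - 1) ^ 2 - 1) * Real.exp 0, 0)
    with hφ
  have hcont : Continuous φ := by
    have hV : Continuous fun x : ℝ => V (x, 0, 0) :=
      hVc.comp (by fun_prop)
    unfold φ
    unfold dot3
    fun_prop
  -- φ is nonzero on [0,1]
  have key : ∀ x ∈ Set.Icc (0:ℝ) 1, φ x ≠ 0 := by
    rintro x ⟨hx0, hx1⟩
    rcases eq_or_lt_of_le hx1 with h1 | h1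
    · -- x = 1
      subst h1
      have h := hVt (1, 0, 0)
      have hf : Int.fract (1:ℝ) = 0 := by
        simpa using Int.fract_intCast (1:ℤ)
      simp only [G17, hf, dot3] at h
      simp only [hφ, dot3]
      intro hc
      apply h
      norm_num at hc ⊢
      linarith
    · -- x ∈ [0,1)
      have hf : Int.fract x = x := Int.fract_eq_self.mpr ⟨hx0, h1⟩
      have h := hVt (x, 0, 0)
      simp only [G17, hf] at h
      simpa [hφ] using h
  have hper : V ((1:ℝ), (0:ℝ), (0:ℝ)) = V (0, 0, 0) := by
    simpa using (hVper (0, 0, 0)).1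
  have h01 : φ 0 = -φ 1 := by
    simp only [hφ, dot3, hper]
    ring
  have hmem : (0:ℝ) ∈ Set.uIcc (φ 0) (φ 1) := by
    have h1 := key 1 (by norm_num)
    rcases lt_or_gt_of_ne h1 with h | h
    · exact Set.mem_uIcc.mpr (Or.inr ⟨le_of_lt h, by linarith⟩)
    · exact Set.mem_uIcc.mpr (Or.inl ⟨by linarith, le_of_lt h⟩)
  have := intermediate_value_uIcc (f := φ) (a := 0) (b := 1) hcont.continuousOn
  obtain ⟨x, hx, hx0⟩ := this hmem
  rw [Set.uIcc_of_le (by norm_num : (0:ℝ) ≤ 1)] at hx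
  exact key x hx hx0
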